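/- For every positive integer k, the identity ∑_{i=1}^{k} P_{2i} P_{2k-2i} = ∑_{i=1}^{k} P_{2i-1} P_{2k-2i+1} holds in the ring of symmetric functions, where P_0 = 1 and P_m = (1/2) ∑_{i=0}^m h_i e_{m-i}. -/

import Mathlib

/-!
With `H(t) = ∑ hₙ tⁿ = ∏ᵢ 1 / (1 - xᵢ t)` and `E(t) = ∑ eₙ tⁿ = ∏ᵢ (1 + xᵢ t)` one has
`H(t) E(-t) = 1`, so `Q(t) = H(t) E(t)` satisfies `Q(t) Q(-t) = 1`. The definition of `Pₘ` says
exactly that `Q = 2P - 1` for `P(t) = ∑ Pₘ tᵐ`, whence `2 P(t) P(-t) = P(t) + P(-t)`. The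
coefficient of `t^(2k)` gives `∑_{m=0}^{2k} (-1)ᵐ Pₘ P_{2k-m} = P_{2k}`; the term `m = 0` cancels
the right-hand side, and the remaining alternating sum is the difference of the two sides.
-/

open MvPolynomial Finset

variable (σ : Type*) [Fintype σ] [DecidableEq σ]

/-- The one-row Schur-P symmetric function: `P_0 = 1` and
`P_m = (1/2) ∑_{i=0}^m h_i e_{m-i}` for `m ≥ 1`. -/
noncomputable def schurP (m : ℕ) : MvPolynomial σ ℚ :=
  if m = 0 then 1
  else (1 / 2 : ℚ) • ∑ i ∈ range (m + 1), hsymm σ ℚ i * esymm σ ℚ (m - i)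

theorem Finset.sum_range_two_mul_add_one_neg_one_pow_mul {R : Type*} [Ring R] (g : ℕ → R)
    (k : ℕ) :
    ∑ m ∈ range (2 * k + 1), (-1) ^ m * g m =
      g 0 + ∑ i ∈ Icc 1 k, (g (2 * i) - g (2 * i - 1)) := by
  induction k with
  | zero => simp
  | succ k ih =>
    have hodd : (-1 : R) ^ (2 * k + 1) = -1 := (odd_two_mul_add_one k).neg_one_pow
    have heven : (-1 : R) ^ (2 * k + 1 + 1) = 1 := Even.neg_one_pow ⟨k + 1, by ring⟩
    rw [show 2 * (k + 1) + 1 = 2 * k + 1 + 1 + 1 by ring, sum_range_succ, sum_range_succ, ih,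
      sum_Icc_succ_top (by omega), hodd, heven, show 2 * (k + 1) = 2 * k + 1 + 1 by ring,
      Nat.add_sub_cancel, neg_one_mul, one_mul]
    abel

namespace PowerSeries

theorem rescale_C {R : Type*} [CommSemiring R] (a r : R) : rescale a (C r) = C r := by
  ext n
  rw [coeff_rescale, coeff_C]
  split_ifs with h <;> simp [h]

theorem coeff_ofNat_mul {R : Type*} [Semiring R] (n m : ℕ) [n.AtLeastTwo] (f : PowerSeries R) :
    coeff m ((ofNat(n) : PowerSeries R) * f) = ofNat(n) * coeff m f := by
  rw [← map_ofNat C n, coeff_C_mul]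

theorem mk_pow_mul_one_sub_C_mul_X {R : Type*} [CommRing R] (r : R) :
    mk (r ^ ·) * (1 - C r * X) = 1 := by
  have hmk : mk (r ^ ·) = rescale r (mk 1) := by simp [rescale_mk]
  rw [hmk, ← rescale_X, ← map_one (rescale r), ← map_sub, ← map_mul, mk_one_mul_one_sub_eq_one,
    map_one]

end PowerSeries

namespace MvPolynomial

variable (ι R : Type*) [CommRing R] [Fintype ι]

noncomputable def esymmSeries : PowerSeries (MvPolynomial ι R) := PowerSeries.mk (esymm ι R)

theorem prod_one_add_C_X_mul_X_eq_esymmSeries :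
    ∏ i, (1 + PowerSeries.C (X i) * PowerSeries.X) = esymmSeries ι R := by
  classical
  refine PowerSeries.ext fun n => ?_
  simp_rw [add_comm (1 : PowerSeries _)]
  rw [prod_add]
  simp only [prod_const_one, mul_one, prod_mul_distrib, prod_const, ← map_prod, map_sum,
    PowerSeries.coeff_C_mul_X_pow, esymmSeries, PowerSeries.coeff_mk, esymm,
    powersetCard_eq_filter, sum_filter]
  exact sum_congr rfl fun t _ => if_congr eq_comm rfl rfl

variable [DecidableEq ι]

noncomputable def hsymmSeries : PowerSeries (MvPolynomial ι R) := PowerSeries.mk (hsymm ι R)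

theorem hsymm_eq_sum_finsuppAntidiag (n : ℕ) :
    hsymm ι R n = ∑ l ∈ univ.finsuppAntidiag n, ∏ i, X i ^ l i := by
  let e : Sym ι n ≃ univ.finsuppAntidiag n := (Sym.equivNatSum ι n).trans
    (Equiv.subtypeEquivRight fun l => by simp [mem_finsuppAntidiag, Finsupp.sum_fintype])
  rw [← sum_coe_sort, hsymm]
  refine Fintype.sum_equiv e _ _ fun s => ?_
  rw [prod_multiset_map_count, prod_subset (subset_univ _) fun i _ hi => by
    rw [Multiset.count_eq_zero_of_notMem (by simpa using hi), pow_zero]]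
  simp [e]

theorem prod_mk_X_pow_eq_hsymmSeries : ∏ i, PowerSeries.mk (X i ^ ·) = hsymmSeries ι R := by
  ext n
  rw [PowerSeries.coeff_prod, hsymmSeries, PowerSeries.coeff_mk, hsymm_eq_sum_finsuppAntidiag]
  simp only [PowerSeries.coeff_mk]

theorem hsymmSeries_mul_rescale_esymmSeries :
    hsymmSeries ι R * PowerSeries.rescale (-1) (esymmSeries ι R) = 1 := by
  rw [← prod_mk_X_pow_eq_hsymmSeries, ← prod_one_add_C_X_mul_X_eq_esymmSeries, map_prod,
    ← prod_mul_distrib]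
  refine prod_eq_one fun i _ => ?_
  rw [map_add, map_one, map_mul, PowerSeries.rescale_C, PowerSeries.rescale_neg_one_X, mul_neg,
    ← sub_eq_add_neg]
  exact PowerSeries.mk_pow_mul_one_sub_C_mul_X _

theorem rescale_hsymmSeries_mul_esymmSeries_mul_self :
    PowerSeries.rescale (-1) (hsymmSeries ι R * esymmSeries ι R) *
      (hsymmSeries ι R * esymmSeries ι R) = 1 := by
  have h := congrArg (PowerSeries.rescale (-1)) (hsymmSeries_mul_rescale_esymmSeries ι R)
  rw [map_mul, map_one, PowerSeries.rescale_rescale, neg_one_mul, neg_neg,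
    PowerSeries.rescale_one, RingHom.id_apply] at h
  calc _ = hsymmSeries ι R * PowerSeries.rescale (-1) (esymmSeries ι R) *
        (PowerSeries.rescale (-1) (hsymmSeries ι R) * esymmSeries ι R) := by rw [map_mul]; ring
    _ = 1 := by rw [hsymmSeries_mul_rescale_esymmSeries, h, one_mul]

end MvPolynomial

noncomputable def schurPSeries : PowerSeries (MvPolynomial σ ℚ) := PowerSeries.mk (schurP σ)

theorem schurP_zero : schurP σ 0 = 1 := if_pos rfl

theorem hsymmSeries_mul_esymmSeries_eq_two_mul_schurPSeries_sub_one :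
    hsymmSeries σ ℚ * esymmSeries σ ℚ = 2 * schurPSeries σ - 1 := by
  refine PowerSeries.ext fun m => ?_
  rw [PowerSeries.coeff_mul, Nat.sum_antidiagonal_eq_sum_range_succ_mk, map_sub,
    PowerSeries.coeff_ofNat_mul, PowerSeries.coeff_one]
  rcases eq_or_ne m 0 with rfl | hm
  · norm_num [hsymmSeries, esymmSeries, schurPSeries, schurP_zero]
  · simp only [hsymmSeries, esymmSeries, schurPSeries, PowerSeries.coeff_mk, schurP, if_neg hm,
      sub_zero]
    rw [two_mul, ← two_smul ℚ, smul_smul]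
    norm_num

theorem two_mul_rescale_schurPSeries_mul_self :
    2 * (PowerSeries.rescale (-1) (schurPSeries σ) * schurPSeries σ) =
      PowerSeries.rescale (-1) (schurPSeries σ) + schurPSeries σ := by
  have h := rescale_hsymmSeries_mul_esymmSeries_mul_self σ ℚ
  rw [hsymmSeries_mul_esymmSeries_eq_two_mul_schurPSeries_sub_one, map_sub, map_mul, map_ofNat,
    map_one] at h
  have h2 : IsUnit (2 : PowerSeries (MvPolynomial σ ℚ)) := by
    simpa only [map_ofNat] using
      (IsUnit.mk0 (2 : ℚ) two_ne_zero).map (algebraMap ℚ (PowerSeries (MvPolynomial σ ℚ)))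
  exact h2.mul_left_cancel (by linear_combination h)

theorem sum_range_neg_one_pow_mul_schurP_mul_schurP (k : ℕ) :
    ∑ m ∈ range (2 * k + 1), (-1) ^ m * (schurP σ m * schurP σ (2 * k - m)) =
      schurP σ (2 * k) := by
  have h := congrArg (PowerSeries.coeff (2 * k)) (two_mul_rescale_schurPSeries_mul_self σ)
  rw [PowerSeries.coeff_ofNat_mul, PowerSeries.coeff_mul,
    Nat.sum_antidiagonal_eq_sum_range_succ_mk, map_add] at h
  simp only [schurPSeries, PowerSeries.coeff_rescale, PowerSeries.coeff_mk,
    (even_two_mul k).neg_one_pow, one_mul, mul_assoc, ← two_mul] at h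
  exact mul_left_cancel₀ two_ne_zero h

theorem sum_even_schurP_eq_sum_odd_schurP (k : ℕ) :
    ∑ i ∈ Icc 1 k, schurP σ (2 * i) * schurP σ (2 * k - 2 * i) =
      ∑ i ∈ Icc 1 k, schurP σ (2 * i - 1) * schurP σ (2 * k - 2 * i + 1) := by
  have h := sum_range_neg_one_pow_mul_schurP_mul_schurP σ k
  rw [sum_range_two_mul_add_one_neg_one_pow_mul, schurP_zero, one_mul, Nat.sub_zero, add_eq_left,
    sum_sub_distrib, sub_eq_zero] at h
  refine h.trans (sum_congr rfl fun i hi => ?_)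
  rw [mem_Icc] at hi
  rw [show 2 * k - (2 * i - 1) = 2 * k - 2 * i + 1 by omega]
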